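/- If L is a stable triplet cover of a fully-resolved X-tree T with n := |X| ≥ 3, then |L| = 2n − 3. -/

import Mathlib

open SimpleGraph

/-- An `X`-tree: a finite tree whose leaf set is (the image of) `X`,
with no vertices of degree 2. -/
structure XTree (α : Type) (X : Set α) where
  V : Type
  fintypeV : Fintype V
  tree : SimpleGraph V
  isTree : tree.IsTree
  ι : α → V
  ι_injOn : Set.InjOn ι X
  leaf_iff : ∀ v : V, (tree.neighborSet v).ncard = 1 ↔ v ∈ ι '' X
  no_deg_two : ∀ v : V, (tree.neighborSet v).ncard ≠ 2

namespace XTree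

variable {α : Type} {X : Set α}

/-- A vertex is interior if it is not a leaf. -/
def IsInterior (T : XTree α X) (v : T.V) : Prop := v ∉ T.ι '' X

/-- Fully-resolved: every interior vertex has degree 3. -/
def IsFullyResolved (T : XTree α X) : Prop :=
  ∀ v : T.V, T.IsInterior v → (T.tree.neighborSet v).ncard = 3

/-- The unique path between two vertices of the tree. -/
noncomputable def treePath (T : XTree α X) (u v : T.V) : T.tree.Walk u v :=
  (T.isTree.existsUnique_path u v).exists.choose

lemma treePath_isPath (T : XTree α X) (u v : T.V) : (T.treePath u v).IsPath :=
  (T.isTree.existsUnique_path u v).exists.choose_spec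

/-- Weighted path distance between two vertices. -/
noncomputable def pathDist (T : XTree α X) (w : Sym2 T.V → ℝ) (u v : T.V) : ℝ :=
  ((T.treePath u v).edges.map w).sum

lemma treePath_symm (T : XTree α X) (u v : T.V) :
    T.treePath u v = (T.treePath v u).reverse :=
  (T.isTree.existsUnique_path u v).unique (T.treePath_isPath u v)
    ((T.treePath_isPath v u).reverse)

lemma pathDist_symm (T : XTree α X) (w : Sym2 T.V → ℝ) (u v : T.V) :
    T.pathDist w u v = T.pathDist w v u := by
  unfold pathDist
  rw [treePath_symm, SimpleGraph.Walk.edges_reverse, List.map_reverse, List.sum_reverse]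

/-- The induced distance on pairs of leaf labels. -/
noncomputable def cordDist (T : XTree α X) (w : Sym2 T.V → ℝ) : Sym2 α → ℝ :=
  Sym2.lift ⟨fun a b => T.pathDist w (T.ι a) (T.ι b),
    fun a b => T.pathDist_symm w (T.ι a) (T.ι b)⟩

/-- An edge-weighting assigns a nonnegative weight to every edge. -/
def IsEdgeWeighting (T : XTree α X) (w : Sym2 T.V → ℝ) : Prop :=
  ∀ e ∈ T.tree.edgeSet, 0 ≤ w e

/-- A proper edge-weighting gives positive weight to every interior edge
(i.e. every edge not incident with a leaf). -/
def IsProperWeighting (T : XTree α X) (w : Sym2 T.V → ℝ) : Prop :=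
  T.IsEdgeWeighting w ∧ ∀ e ∈ T.tree.edgeSet, (∀ v ∈ e, T.IsInterior v) → 0 < w e

/-- The set of cords (2-element subsets) of `X`. -/
def cords (X : Set α) : Set (Sym2 α) := {c | ¬ c.IsDiag ∧ ∀ a ∈ c, a ∈ X}

/-- Two weighted trees are `L`-isometric if their leaf distances agree on `L`. -/
def LIsometric (T : XTree α X) (w : Sym2 T.V → ℝ) (T' : XTree α X) (w' : Sym2 T'.V → ℝ)
    (L : Set (Sym2 α)) : Prop :=
  ∀ c ∈ L, T.cordDist w c = T'.cordDist w' c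

/-- `L` is an edge-weight lasso for `T`. -/
def IsEdgeWeightLasso (T : XTree α X) (L : Set (Sym2 α)) : Prop :=
  ∀ w w' : Sym2 T.V → ℝ, T.IsProperWeighting w → T.IsProperWeighting w' →
    LIsometric T w T w' L → ∀ e ∈ T.tree.edgeSet, w e = w' e

/-- Two `X`-trees are equivalent if there is a graph isomorphism fixing `X`. -/
def Equivalent (T T' : XTree α X) : Prop :=
  ∃ φ : T.tree ≃g T'.tree, ∀ a ∈ X, φ (T.ι a) = T'.ι a

/-- `L` is a topological lasso for `T`. -/
def IsTopologicalLasso (T : XTree α X) (L : Set (Sym2 α)) : Prop :=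
  ∀ (T' : XTree α X) (w : Sym2 T.V → ℝ) (w' : Sym2 T'.V → ℝ),
    T.IsProperWeighting w → T'.IsProperWeighting w' →
    LIsometric T w T' w' L → Equivalent T T'

/-- `L` is a strong lasso for `T`. -/
def IsStrongLasso (T : XTree α X) (L : Set (Sym2 α)) : Prop :=
  IsEdgeWeightLasso T L ∧ IsTopologicalLasso T L

/-- The set of leaf labels on the side of edge `e` containing endpoint `u`. -/
def sideSet (T : XTree α X) (e : Sym2 T.V) (u : T.V) : Set α :=
  {a | a ∈ X ∧ (T.tree.deleteEdges {e}).Reachable (T.ι a) u}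

/-- The clusters of `T`: leaf sets of the two components of `T - e`, over all edges `e`. -/
def clus (T : XTree α X) : Set (Set α) :=
  {A | ∃ e ∈ T.tree.edgeSet, ∃ u ∈ e, A = T.sideSet e u}

/-- A stable transversal for a collection of subsets of `α`. -/
def IsStableTransversal (C : Set (Set α)) (f : Set α → α) : Prop :=
  (∀ A ∈ C, f A ∈ A) ∧ ∀ A ∈ C, ∀ B ∈ C, f A ∈ B → B ⊆ A → f A = f B

/-- Leaf labels of the component of `T - v` containing the vertex `u`. -/
def compSet (T : XTree α X) (v u : T.V) : Set α :=
  {a | a ∈ X ∧ ∃ p : T.tree.Walk (T.ι a) u, v ∉ p.support}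

/-- The triplet cover `L_{(T,f)}` generated by a transversal `f`. -/
def tripletCoverOf (T : XTree α X) (f : Set α → α) : Set (Sym2 α) :=
  {c | ∃ v u₁ u₂ : T.V, T.IsInterior v ∧ T.tree.Adj v u₁ ∧ T.tree.Adj v u₂ ∧ u₁ ≠ u₂ ∧
    c = s(f (T.compSet v u₁), f (T.compSet v u₂))}

/-- `L` is a stable triplet cover of `T`. -/
def IsStableTripletCover (T : XTree α X) (L : Set (Sym2 α)) : Prop :=
  ∃ f : Set α → α, IsStableTransversal (clus T) f ∧ L = tripletCoverOf T f

/-- `T|{a,b,c,d}` is the quartet tree `ab||cd`: the four leaves are distinct members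
of `X` and the path from `a` to `b` is vertex-disjoint from the path from `c` to `d`. -/
def Quartet (T : XTree α X) (a b c d : α) : Prop :=
  a ∈ X ∧ b ∈ X ∧ c ∈ X ∧ d ∈ X ∧ List.Pairwise (· ≠ ·) [a, b, c, d] ∧
  ∀ (p : T.tree.Walk (T.ι a) (T.ι b)) (q : T.tree.Walk (T.ι c) (T.ι d)),
    p.IsPath → q.IsPath → ∀ v, v ∈ p.support → v ∉ q.support

/-- The cord `c` admits pivots relative to already-available cords `L ∪ earlier`. -/
def HasPivots (T : XTree α X) (L : Set (Sym2 α)) (earlier : List (Sym2 α))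
    (c : Sym2 α) : Prop :=
  ∃ a b p q : α, c = s(a, b) ∧ Quartet T a p q b ∧
    ∀ c' ∈ [s(a, p), s(a, q), s(b, p), s(b, q), s(p, q)], c' ∈ L ∨ c' ∈ earlier

/-- `ord` is a shellable ordering of `cords X - L` with respect to `T`. -/
def IsShellableOrdering (T : XTree α X) (L : Set (Sym2 α)) (ord : List (Sym2 α)) : Prop :=
  ord.Nodup ∧ (∀ c, c ∈ ord ↔ c ∈ cords X \ L) ∧
  ∀ i (h : i < ord.length), HasPivots T L (ord.take i) (ord.get ⟨i, h⟩)

/-- `L` is a shellable lasso for `T`: `L ⊆ cords X`, every element of `X` occurs in some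
cord of `L`, and `cords X - L` admits a shellable ordering. -/
def IsShellableLasso (T : XTree α X) (L : Set (Sym2 α)) : Prop :=
  L ⊆ cords X ∧ (∀ a ∈ X, ∃ c ∈ L, a ∈ c) ∧ ∃ ord, IsShellableOrdering T L ord

/-- The graph `(Xs, L)` is a 2d-tree. -/
def Is2dTree (Xs : Set α) (L : Set (Sym2 α)) : Prop :=
  ∃ ord : List α, ord.Nodup ∧ (∀ a, a ∈ ord ↔ a ∈ Xs) ∧
    ∃ h2 : 2 ≤ ord.length,
      s(ord.get ⟨0, by omega⟩, ord.get ⟨1, by omega⟩) ∈ L ∧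
      ∀ i (h : i < ord.length), 2 ≤ i →
        {b | b ∈ ord.take i ∧ s(ord.get ⟨i, h⟩, b) ∈ L}.ncard = 2

/-- Leaves `x` and `y` form a cherry of `T`. -/
def IsCherry (T : XTree α X) (x y : α) : Prop :=
  x ≠ y ∧ x ∈ X ∧ y ∈ X ∧ ∃ v : T.V, T.tree.Adj (T.ι x) v ∧ T.tree.Adj (T.ι y) v

/-- `T'` is (equivalent to) the restriction `T|Y` of `T` to `Y ⊆ X`, characterized by the
fact that the clusters of `T|Y` are exactly the nonempty proper restrictions to `Y`
of clusters of `T`. -/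
def IsRestrictionOf {Y : Set α} (T' : XTree α Y) (T : XTree α X) : Prop :=
  Y ⊆ X ∧ clus T' = {A | (∃ B ∈ clus T, A = B ∩ Y) ∧ A.Nonempty ∧ A ≠ Y}

open Classical in
/-- One application of the extension rule (R), acting on a state consisting of
the current set of cords together with the current distance values. -/
def RStep (Xs : Set α) (S S' : Set (Sym2 α) × (Sym2 α → ℝ)) : Prop :=
  ∃ x y u z : α, x ∈ Xs ∧ y ∈ Xs ∧ u ∈ Xs ∧ z ∈ Xs ∧
    List.Pairwise (· ≠ ·) [x, y, u, z] ∧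
    s(x, y) ∈ S.1 ∧ s(y, u) ∈ S.1 ∧ s(y, z) ∈ S.1 ∧ s(x, u) ∈ S.1 ∧ s(u, z) ∈ S.1 ∧
    s(x, z) ∉ S.1 ∧
    S.2 s(x, y) + S.2 s(u, z) < S.2 s(x, u) + S.2 s(y, z) ∧
    S'.1 = insert s(x, z) S.1 ∧
    S'.2 = Function.update S.2 s(x, z) (S.2 s(x, u) + S.2 s(y, z) - S.2 s(y, u))

/-- `S` is the result `cl_R(L)` (with its `d`-values) of exhaustively applying rule (R)
starting from `L` with initial distance values `d`. -/
def IsRClosureOf (Xs : Set α) (L : Set (Sym2 α)) (d : Sym2 α → ℝ)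
    (S : Set (Sym2 α) × (Sym2 α → ℝ)) : Prop :=
  Relation.ReflTransGen (RStep Xs) (L, d) S ∧ ∀ S', ¬ RStep Xs S S'

end XTree

/-!
Write `f(v, u)` for the value of `f` on the leaves of the branch at `v` through its neighbour `u`.
The branches at an interior vertex are disjoint, so its three values `f(v, u)` are distinct and it
contributes exactly three cords. Stability ties together the representatives of nested clusters:
the interior vertices contributing a given cord form a subtree, and two adjacent interior vertices
share exactly one cord. A subtree has one vertex more than it has edges, and the `n - 3` edges
between the `n - 2` interior vertices are partitioned among these subtrees, so counting pairs
(cord, vertex) gives `3 (n - 2) = |L| + (n - 3)`.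
-/

namespace SimpleGraph

open Finset

variable {V : Type*} {G : SimpleGraph V} {u v w x y z : V}

def branch (G : SimpleGraph V) (v u : V) : Set V := {x | ∃ p : G.Walk x u, v ∉ p.support}

lemma ne_of_mem_branch (h : x ∈ G.branch v u) : x ≠ v := by
  obtain ⟨p, hp⟩ := h
  rintro rfl
  exact hp p.start_mem_support

lemma mem_branch_self (h : u ≠ v) : u ∈ G.branch v u := ⟨.nil, by simpa using h.symm⟩

lemma mem_branch_of_walk (hx : x ∈ G.branch v u) (q : G.Walk y x) (hq : v ∉ q.support) :
    y ∈ G.branch v u := by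
  obtain ⟨p, hp⟩ := hx
  refine ⟨q.append p, fun h => ?_⟩
  rw [Walk.support_append, List.mem_append] at h
  exact h.elim hq fun h => hp (List.mem_of_mem_tail h)

lemma mem_branch_of_mem_support {p : G.Walk x u} (hp : v ∉ p.support) (hz : z ∈ p.support) :
    z ∈ G.branch v u := by
  classical
  exact ⟨p.dropUntil z hz, fun h => hp (p.support_dropUntil_subset_support hz h)⟩

lemma mem_branch_of_mem_support_of_isPath (hw : w ∈ G.branch v u) {p : G.Walk w v}
    (hp : p.IsPath) (hz : z ∈ p.support) (hzv : z ≠ v) : z ∈ G.branch v u := by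
  classical
  exact mem_branch_of_walk hw (p.takeUntil z hz).reverse
    (by simpa using Walk.endpoint_notMem_support_takeUntil hp hz hzv.symm)

lemma Reachable.exists_mem_branch (h : G.Reachable x v) (hxv : x ≠ v) :
    ∃ u, G.Adj v u ∧ x ∈ G.branch v u := by
  obtain ⟨p, hp⟩ := h.symm.exists_isPath
  cases p with
  | nil => exact absurd rfl hxv
  | cons hadj q =>
    rw [Walk.cons_isPath_iff] at hp
    exact ⟨_, hadj, q.reverse, by simpa using hp.2⟩

lemma IsAcyclic.mem_edges_of_adj (hG : G.IsAcyclic) (h : G.Adj v u) (p : G.Walk v u) :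
    s(v, u) ∈ p.edges :=
  isBridge_iff_forall_walk_mem_edges.mp (isAcyclic_iff_forall_adj_isBridge.mp hG h) p

lemma IsAcyclic.eq_of_mem_branch (hG : G.IsAcyclic) {u₁ u₂ : V} (h₁ : G.Adj v u₁)
    (h₂ : G.Adj v u₂) (hx₁ : x ∈ G.branch v u₁) (hx₂ : x ∈ G.branch v u₂) : u₁ = u₂ := by
  obtain ⟨p₁, hp₁⟩ := hx₁
  obtain ⟨p₂, hp₂⟩ := hx₂
  have hv : v ∉ (p₂.reverse.append p₁).support := by
    simp only [Walk.support_append, Walk.support_reverse, List.mem_append, List.mem_reverse]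
    exact fun h => h.elim hp₂ fun h => hp₁ (List.mem_of_mem_tail h)
  have := hG.mem_edges_of_adj h₁ (.cons h₂ (p₂.reverse.append p₁))
  rw [Walk.edges_cons, List.mem_cons] at this
  rcases this with h | h
  · exact Sym2.congr_right.mp h
  · exact absurd ((p₂.reverse.append p₁).fst_mem_support_of_mem_edges h) hv

lemma IsAcyclic.not_mem_branch_of_adj (hG : G.IsAcyclic) (h : G.Adj v w)
    (hx : x ∈ G.branch v w) : x ∉ G.branch w v := by
  rintro ⟨q, hq⟩
  obtain ⟨p, hp⟩ := hx
  have := hG.mem_edges_of_adj h (q.reverse.append p)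
  rw [Walk.edges_append, Walk.edges_reverse, List.mem_append, List.mem_reverse] at this
  rcases this with h | h
  · exact hq (q.snd_mem_support_of_mem_edges h)
  · exact hp (p.fst_mem_support_of_mem_edges h)

lemma IsAcyclic.branch_subset_branch (hG : G.IsAcyclic) {t t' : V}
    (hw : w ∈ G.branch v u) (ht : G.Adj w t) (hv : v ∈ G.branch w t) (ht' : G.Adj w t')
    (hne : t' ≠ t) : G.branch w t' ⊆ G.branch v u := by
  rintro x ⟨p, hp⟩
  have hvp : v ∉ p.support := fun h =>
    hne (hG.eq_of_mem_branch ht' ht (mem_branch_of_mem_support hp h) hv)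
  refine mem_branch_of_walk hw (p.concat ht'.symm) ?_
  simpa [Walk.support_concat, hvp] using (ne_of_mem_branch hw).symm

lemma IsAcyclic.exists_adj_ne_of_mem_support (hG : G.IsAcyclic) {p : G.Walk v w}
    (hp : p.IsPath) (hz : z ∈ p.support) (hzv : z ≠ v) (hzw : z ≠ w) :
    ∃ a b, G.Adj z a ∧ G.Adj z b ∧ a ≠ b ∧ v ∈ G.branch z a ∧ w ∈ G.branch z b := by
  classical
  obtain ⟨a, ha, hva⟩ := Reachable.exists_mem_branch ⟨p.takeUntil z hz⟩ hzv.symm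
  obtain ⟨b, hb, hwb⟩ := Reachable.exists_mem_branch ⟨(p.dropUntil z hz).reverse⟩ hzw.symm
  refine ⟨a, b, ha, hb, ?_, hva, hwb⟩
  rintro rfl
  obtain ⟨q, hq⟩ := hva
  obtain ⟨r, hr⟩ := hwb
  have hzW : z ∉ (q.append r.reverse).support := by
    simp only [Walk.support_append, Walk.support_reverse, List.mem_append]
    exact fun h => h.elim hq fun h => hr (List.mem_reverse.mp (List.mem_of_mem_tail h))
  have hpW : p = (q.append r.reverse).bypass :=
    congrArg Subtype.val <| hG.subsingleton_path v w |>.elim ⟨p, hp⟩ ⟨_, Walk.bypass_isPath _⟩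
  rw [hpW] at hz
  exact hzW (Walk.support_bypass_subset_support _ hz)

lemma IsAcyclic.mem_branch_iff_reachable (hG : G.IsAcyclic) (h : G.Adj v u) :
    x ∈ G.branch v u ↔ (G.deleteEdges {s(v, u)}).Reachable x u := by
  classical
  rw [reachable_deleteEdges_iff_exists_walk]
  refine ⟨fun ⟨p, hp⟩ => ⟨p, fun he => hp (p.fst_mem_support_of_mem_edges he)⟩,
    fun ⟨p, hp⟩ => ⟨p, fun hv => hp ?_⟩⟩
  exact p.edges_dropUntil_subset_edges hv (hG.mem_edges_of_adj h (p.dropUntil v hv))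

/-- The neighbour of `v` towards `w`; junk value `v` if there is none (e.g. if `w = v`). -/
noncomputable def toward (G : SimpleGraph V) (v w : V) : V :=
  open Classical in
  if h : ∃ u, G.Adj v u ∧ w ∈ G.branch v u then h.choose else v

lemma IsTree.toward_spec (hG : G.IsTree) (h : w ≠ v) :
    G.Adj v (G.toward v w) ∧ w ∈ G.branch v (G.toward v w) := by
  have hex := (hG.connected w v).exists_mem_branch h
  rw [toward, dif_pos hex]
  exact hex.choose_spec

lemma IsTree.adj_toward (hG : G.IsTree) (h : w ≠ v) : G.Adj v (G.toward v w) :=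
  (hG.toward_spec h).1

lemma IsTree.mem_branch_toward (hG : G.IsTree) (h : w ≠ v) : w ∈ G.branch v (G.toward v w) :=
  (hG.toward_spec h).2

lemma IsTree.toward_eq (hG : G.IsTree) (hu : G.Adj v u) (hw : w ∈ G.branch v u) :
    G.toward v w = u :=
  hG.isAcyclic.eq_of_mem_branch (hG.adj_toward (ne_of_mem_branch hw)) hu
    (hG.mem_branch_toward (ne_of_mem_branch hw)) hw

lemma IsTree.mem_branch_toward_of_mem_support (hG : G.IsTree) {p : G.Walk v w} (hp : p.IsPath)
    (hz : z ∈ p.support) (hzv : z ≠ v) : z ∈ G.branch v (G.toward v w) := by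
  obtain rfl | hwv := eq_or_ne w v
  · rw [Walk.nil_iff_support_eq.mp (Walk.isPath_iff_nil.mp hp), List.mem_singleton] at hz
    exact absurd hz hzv
  exact mem_branch_of_mem_support_of_isPath (hG.mem_branch_toward hwv) hp.reverse
    (by simpa using hz) hzv

lemma IsTree.toward_ne_toward_of_mem_support (hG : G.IsTree) {p : G.Walk v w} (hp : p.IsPath)
    (hz : z ∈ p.support) (hzv : z ≠ v) (hzw : z ≠ w) : G.toward z v ≠ G.toward z w := by
  obtain ⟨a, b, ha, hb, hab, hva, hwb⟩ := hG.isAcyclic.exists_adj_ne_of_mem_support hp hz hzv hzw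
  rwa [hG.toward_eq ha hva, hG.toward_eq hb hwb]

lemma IsTree.branch_subset_branch_toward (hG : G.IsTree) {a : V} (hvw : v ≠ w)
    (ha : G.Adj v a) (hne : a ≠ G.toward v w) : G.branch v a ⊆ G.branch w (G.toward w v) :=
  hG.isAcyclic.branch_subset_branch (hG.mem_branch_toward hvw) (hG.adj_toward hvw.symm)
    (hG.mem_branch_toward hvw.symm) ha hne

lemma induce_connected_of_forall_walk {s : Set V} (hu : u ∈ s)
    (h : ∀ v ∈ s, ∃ p : G.Walk u v, ∀ x ∈ p.support, x ∈ s) : (G.induce s).Connected :=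
  G.induce_connected_of_patches u hu fun hv =>
    let ⟨p, hp⟩ := h _ hv
    ⟨_, hp, p.start_mem_support, p.end_mem_support, p.connected_induce_support.preconnected _ _⟩

lemma IsAcyclic.card_edgeFinset_inter_sym2_add_one [Fintype V] [DecidableEq V]
    [DecidableRel G.Adj] (hG : G.IsAcyclic) {s : Finset V} (hs : (G.induce ↑s).Connected) :
    #(G.edgeFinset ∩ s.sym2) + 1 = #s := by
  rw [← filter_edgeFinset_toFinset_subset, card_filter_edgeFinset_toFinset_subset]
  convert (IsTree.card_edgeFinset ⟨hs, hG.induce _⟩) using 1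
  simp

lemma IsAcyclic.sum_card_add_one {ι : Type*} [Fintype V] [DecidableEq V] [DecidableRel G.Adj]
    (hG : G.IsAcyclic) {I : Finset V} (hI : (G.induce ↑I).Connected) {L : Finset ι}
    {S : ι → Finset V} (hS : ∀ c ∈ L, (G.induce ↑(S c)).Connected) (hSI : ∀ c ∈ L, S c ⊆ I)
    (hE : ∀ e ∈ G.edgeFinset ∩ I.sym2, ∃! c, c ∈ L ∧ e ∈ (S c).sym2) :
    ∑ c ∈ L, #(S c) + 1 = #L + #I := by
  set E := G.edgeFinset ∩ I.sym2
  have hcard : ∀ c ∈ L, #(S c) = #(E.bipartiteAbove (fun c e => e ∈ (S c).sym2) c) + 1 := by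
    intro c hc
    rw [← hG.card_edgeFinset_inter_sym2_add_one (hS c hc), bipartiteAbove]
    congr 2
    ext e
    simp only [E, mem_inter, mem_filter, and_assoc]
    exact ⟨fun h => ⟨h.1, sym2_mono (hSI c hc) h.2, h.2⟩, fun h => ⟨h.1, h.2.2⟩⟩
  have hunique : ∀ e ∈ E, #(L.bipartiteBelow (fun c e => e ∈ (S c).sym2) e) = 1 := by
    intro e he
    obtain ⟨c, hc, huniq⟩ := hE e he
    refine card_eq_one.mpr ⟨c, ext fun d => ?_⟩
    simp only [bipartiteBelow, mem_filter, mem_singleton]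
    exact ⟨huniq d, by rintro rfl; exact hc⟩
  rw [sum_congr rfl hcard, sum_add_distrib, sum_card_bipartiteAbove_eq_sum_card_bipartiteBelow,
    sum_congr rfl hunique, ← hG.card_edgeFinset_inter_sym2_add_one hI]
  simp only [sum_const, smul_eq_mul, mul_one, E]
  omega

end SimpleGraph

namespace XTree

open SimpleGraph Finset
open scoped Classical

variable {α : Type} {X : Set α} (T : XTree α X)

attribute [local instance] XTree.fintypeV

lemma isInterior_of_adj_of_adj {z a b : T.V} (ha : T.tree.Adj z a) (hb : T.tree.Adj z b)
    (hab : a ≠ b) : T.IsInterior z := fun hz => by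
  have hleaf := (T.leaf_iff z).mpr hz
  have : 1 < (T.tree.neighborSet z).ncard :=
    (Set.one_lt_ncard_iff (Set.toFinite _)).mpr ⟨a, b, ha, hb, hab⟩
  omega

lemma isInterior_of_mem_support {v w z : T.V} {p : T.tree.Walk v w} (hp : p.IsPath)
    (hz : z ∈ p.support) (hv : T.IsInterior v) (hw : T.IsInterior w) : T.IsInterior z := by
  obtain rfl | hzv := eq_or_ne z v
  · exact hv
  obtain rfl | hzw := eq_or_ne z w
  · exact hw
  obtain ⟨a, b, ha, hb, hab, -⟩ := T.isTree.isAcyclic.exists_adj_ne_of_mem_support hp hz hzv hzw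
  exact T.isInterior_of_adj_of_adj ha hb hab

noncomputable def interiorVerts : Finset T.V := (T.ι '' X).toFinsetᶜ

lemma mem_interiorVerts {v : T.V} : v ∈ T.interiorVerts ↔ T.IsInterior v := by
  simp [interiorVerts, IsInterior]

lemma card_interiorVerts_add_two (hT : T.IsFullyResolved) :
    #T.interiorVerts + 2 = X.ncard := by
  have hleaves : #(T.ι '' X).toFinset = X.ncard := by
    rw [← Set.ncard_eq_toFinset_card', T.ι_injOn.ncard_image]
  have hdeg : ∀ v, T.tree.degree v = (T.tree.neighborSet v).ncard := fun v => by
    rw [Set.ncard_eq_toFinset_card', ← neighborFinset_def, card_neighborFinset_eq_degree]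
  have hsum : ∑ v, T.tree.degree v = X.ncard + 3 * #T.interiorVerts := by
    rw [← sum_add_sum_compl (T.ι '' X).toFinset, ← hleaves, interiorVerts, card_eq_sum_ones,
      card_eq_sum_ones, mul_sum]
    congr 1 <;> refine sum_congr rfl fun v hv => ?_ <;> rw [hdeg]
    · exact (T.leaf_iff v).mpr (by simpa using hv)
    · exact hT v (by simpa [IsInterior] using hv)
  have hverts : X.ncard + #T.interiorVerts = Fintype.card T.V := by
    rw [← hleaves, interiorVerts]
    convert card_add_card_compl _
  have hedges := T.isTree.card_edgeFinset
  have hhandshake := T.tree.sum_degrees_eq_twice_card_edges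
  omega

lemma connected_induce_interiorVerts (hI : T.interiorVerts.Nonempty) :
    (T.tree.induce ↑T.interiorVerts).Connected := by
  obtain ⟨v₀, hv₀⟩ := hI
  refine induce_connected_of_forall_walk (u := v₀) hv₀ fun v hv => ⟨T.treePath v₀ v, fun z hz => ?_⟩
  simp only [mem_coe, mem_interiorVerts] at hv hv₀ ⊢
  exact T.isInterior_of_mem_support (T.treePath_isPath v₀ v) hz hv₀ hv

lemma compSet_mem_clus {v u : T.V} (h : T.tree.Adj v u) : T.compSet v u ∈ clus T := by
  refine ⟨s(v, u), h, u, Sym2.mem_mk_right _ _, Set.ext fun a => ?_⟩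
  exact and_congr_right fun _ => T.isTree.isAcyclic.mem_branch_iff_reachable h

variable {T} {f : Set α → α}

lemma apply_compSet_mem (hf : IsStableTransversal (clus T) f) {v u : T.V}
    (h : T.tree.Adj v u) : f (T.compSet v u) ∈ T.compSet v u :=
  hf.1 _ (T.compSet_mem_clus h)

lemma ι_apply_compSet_mem_branch (hf : IsStableTransversal (clus T) f) {v u : T.V}
    (h : T.tree.Adj v u) : T.ι (f (T.compSet v u)) ∈ T.tree.branch v u :=
  (apply_compSet_mem hf h).2

lemma eq_of_apply_compSet_eq (hf : IsStableTransversal (clus T) f) {v u₁ u₂ : T.V}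
    (h₁ : T.tree.Adj v u₁) (h₂ : T.tree.Adj v u₂)
    (he : f (T.compSet v u₁) = f (T.compSet v u₂)) : u₁ = u₂ :=
  T.isTree.isAcyclic.eq_of_mem_branch h₁ h₂ (ι_apply_compSet_mem_branch hf h₁)
    (he ▸ ι_apply_compSet_mem_branch hf h₂)

lemma apply_compSet_eq_of_branch_subset (hf : IsStableTransversal (clus T) f)
    {v u w t : T.V} (hvu : T.tree.Adj v u) (hwt : T.tree.Adj w t)
    (hmem : T.ι (f (T.compSet v u)) ∈ T.tree.branch w t)
    (hsub : T.tree.branch w t ⊆ T.tree.branch v u) :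
    f (T.compSet v u) = f (T.compSet w t) :=
  hf.2 _ (T.compSet_mem_clus hvu) _ (T.compSet_mem_clus hwt)
    ⟨(apply_compSet_mem hf hvu).1, hmem⟩ fun _ ha => ⟨ha.1, hsub ha.2⟩

variable (T f)

/-- The representatives `f(A¹_v), f(A²_v), f(A³_v)` of the clusters at `v`. -/
noncomputable def reps (v : T.V) : Finset α :=
  (T.tree.neighborFinset v).image fun u => f (T.compSet v u)

noncomputable def cordsAt (v : T.V) : Finset (Sym2 α) :=
  (T.reps f v).offDiag.image Sym2.mk.uncurry

variable {T f}

lemma mem_cordsAt {v : T.V} {c : Sym2 α} :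
    c ∈ T.cordsAt f v ↔ ∃ u₁ u₂, T.tree.Adj v u₁ ∧ T.tree.Adj v u₂ ∧
      f (T.compSet v u₁) ≠ f (T.compSet v u₂) ∧ s(f (T.compSet v u₁), f (T.compSet v u₂)) = c := by
  simp only [cordsAt, reps, mem_image, mem_offDiag, mem_neighborFinset, Prod.exists,
    Function.uncurry_apply_pair]
  constructor
  · rintro ⟨_, _, ⟨⟨u₁, h₁, rfl⟩, ⟨u₂, h₂, rfl⟩, hne⟩, rfl⟩
    exact ⟨u₁, u₂, h₁, h₂, hne, rfl⟩
  · rintro ⟨u₁, u₂, h₁, h₂, hne, rfl⟩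
    exact ⟨_, _, ⟨⟨u₁, h₁, rfl⟩, ⟨u₂, h₂, rfl⟩, hne⟩, rfl⟩

lemma card_cordsAt (hT : T.IsFullyResolved) (hf : IsStableTransversal (clus T) f) {v : T.V}
    (hv : T.IsInterior v) : #(T.cordsAt f v) = 3 := by
  have hreps : #(T.reps f v) = 3 := by
    rw [reps, card_image_of_injOn fun u₁ h₁ u₂ h₂ =>
      eq_of_apply_compSet_eq hf (by simpa using h₁) (by simpa using h₂)]
    rw [← hT v hv, Set.ncard_eq_toFinset_card', neighborFinset_def]
  rw [cordsAt, Sym2.card_image_offDiag, hreps]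
  rfl

lemma tripletCoverOf_eq (hf : IsStableTransversal (clus T) f) :
    tripletCoverOf T f = ↑(T.interiorVerts.biUnion (T.cordsAt f)) := by
  ext c
  simp only [tripletCoverOf, coe_biUnion, Set.mem_iUnion, mem_coe, mem_interiorVerts, mem_cordsAt]
  constructor
  · rintro ⟨v, u₁, u₂, hv, h₁, h₂, hne, rfl⟩
    exact ⟨v, hv, u₁, u₂, h₁, h₂, fun he => hne (eq_of_apply_compSet_eq hf h₁ h₂ he), rfl⟩
  · rintro ⟨v, hv, u₁, u₂, h₁, h₂, hne, rfl⟩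
    exact ⟨v, u₁, u₂, hv, h₁, h₂, fun he => hne (he ▸ rfl), rfl⟩

lemma exists_adj_eq_of_mem_cordsAt {w : T.V} {c : Sym2 α} (hc : c ∈ T.cordsAt f w) {x : α}
    (hx : x ∈ c) : ∃ b, T.tree.Adj w b ∧ x = f (T.compSet w b) := by
  obtain ⟨b₁, b₂, h₁, h₂, -, rfl⟩ := mem_cordsAt.mp hc
  rcases Sym2.mem_iff.mp hx with rfl | rfl
  exacts [⟨b₁, h₁, rfl⟩, ⟨b₂, h₂, rfl⟩]

lemma not_isDiag_of_mem_cordsAt {w : T.V} {c : Sym2 α} (hc : c ∈ T.cordsAt f w) : ¬ c.IsDiag := by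
  obtain ⟨b₁, b₂, -, -, hne, rfl⟩ := mem_cordsAt.mp hc
  exact Sym2.mk_isDiag_iff.not.mpr hne

lemma not_forall_mem_branch_of_mem_cordsAt (hf : IsStableTransversal (clus T) f) {w t : T.V}
    (ht : T.tree.Adj w t) {c : Sym2 α} (hc : c ∈ T.cordsAt f w) :
    ¬ ∀ x ∈ c, T.ι x ∈ T.tree.branch w t := by
  intro hall
  obtain ⟨b₁, b₂, h₁, h₂, hne, rfl⟩ := mem_cordsAt.mp hc
  have hb : ∀ b, T.tree.Adj w b → T.ι (f (T.compSet w b)) ∈ T.tree.branch w t → b = t :=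
    fun b hb hmem => T.isTree.isAcyclic.eq_of_mem_branch hb ht
      (ι_apply_compSet_mem_branch hf hb) hmem
  rw [hb b₁ h₁ (hall _ (Sym2.mem_mk_left _ _)), hb b₂ h₂ (hall _ (Sym2.mem_mk_right _ _))] at hne
  exact hne rfl

lemma exists_eq_of_mem_cordsAt_of_mem_cordsAt (hf : IsStableTransversal (clus T) f)
    {v w : T.V} (hvw : v ≠ w) {c : Sym2 α} (hv : c ∈ T.cordsAt f v) (hw : c ∈ T.cordsAt f w) :
    ∃ a, T.tree.Adj v a ∧ a ≠ T.tree.toward v w ∧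
      c = s(f (T.compSet v a), f (T.compSet v (T.tree.toward v w))) := by
  obtain ⟨a₁, a₂, h₁, h₂, hne, rfl⟩ := mem_cordsAt.mp hv
  by_cases e₂ : a₂ = T.tree.toward v w
  · exact ⟨a₁, h₁, fun e₁ => hne (by rw [e₁, e₂]), by rw [e₂]⟩
  by_cases e₁ : a₁ = T.tree.toward v w
  · exact ⟨a₂, h₂, e₂, by rw [e₁, Sym2.eq_swap]⟩
  refine absurd (fun x hx => ?_) (not_forall_mem_branch_of_mem_cordsAt hf
    (T.isTree.adj_toward hvw) hw)
  rcases Sym2.mem_iff.mp hx with rfl | rfl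
  exacts [T.isTree.branch_subset_branch_toward hvw h₁ e₁ (ι_apply_compSet_mem_branch hf h₁),
    T.isTree.branch_subset_branch_toward hvw h₂ e₂ (ι_apply_compSet_mem_branch hf h₂)]

lemma eq_of_mem_cordsAt_of_mem_cordsAt (hf : IsStableTransversal (clus T) f)
    {v w : T.V} (hvw : v ≠ w) {c : Sym2 α} (hv : c ∈ T.cordsAt f v) (hw : c ∈ T.cordsAt f w) :
    c = s(f (T.compSet v (T.tree.toward v w)), f (T.compSet w (T.tree.toward w v))) := by
  obtain ⟨a, ha, hane, rfl⟩ := exists_eq_of_mem_cordsAt_of_mem_cordsAt hf hvw hv hw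
  obtain ⟨b, hb, hbne, hc⟩ := exists_eq_of_mem_cordsAt_of_mem_cordsAt hf hvw.symm hw hv
  have hab : f (T.compSet v a) ≠ f (T.compSet w b) := fun he =>
    hbne <| T.isTree.isAcyclic.eq_of_mem_branch hb (T.isTree.adj_toward hvw)
      (ι_apply_compSet_mem_branch hf hb) <| he.symm ▸
        T.isTree.branch_subset_branch_toward hvw ha hane (ι_apply_compSet_mem_branch hf ha)
  rcases Sym2.eq_iff.mp hc with ⟨he, -⟩ | ⟨he, -⟩
  · exact absurd he hab
  · rw [he, Sym2.eq_swap]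

lemma apply_compSet_toward_eq (hf : IsStableTransversal (clus T) f) {v w z : T.V} {c : Sym2 α}
    (hv : c ∈ T.cordsAt f v) (hw : c ∈ T.cordsAt f w) {p : T.tree.Walk v w} (hp : p.IsPath)
    (hz : z ∈ p.support) (hzv : z ≠ v) (hzw : z ≠ w) :
    f (T.compSet v (T.tree.toward v w)) = f (T.compSet z (T.tree.toward z w)) := by
  have hG := T.isTree
  have hvw : v ≠ w := by
    rintro rfl
    exact hG.toward_ne_toward_of_mem_support hp hz hzv hzw rfl
  have hc := eq_of_mem_cordsAt_of_mem_cordsAt hf hvw hv hw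
  obtain ⟨b, hb, hfb⟩ := exists_adj_eq_of_mem_cordsAt hw (hc ▸ Sym2.mem_mk_left _ _)
  have hbt : b ≠ T.tree.toward w v := by
    rintro rfl
    exact not_isDiag_of_mem_cordsAt hv (hc ▸ Sym2.mk_isDiag_iff.mpr hfb)
  have hwz : T.tree.branch w b ⊆ T.tree.branch z (T.tree.toward z w) :=
    hG.isAcyclic.branch_subset_branch (hG.mem_branch_toward hzw.symm) (hG.adj_toward hvw)
      (hG.mem_branch_toward_of_mem_support hp.reverse (by simpa using hz) hzw) hb hbt
  have hzv' : T.tree.branch z (T.tree.toward z w) ⊆ T.tree.branch v (T.tree.toward v w) :=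
    hG.isAcyclic.branch_subset_branch (hG.mem_branch_toward_of_mem_support hp hz hzv)
      (hG.adj_toward hzv.symm) (hG.mem_branch_toward hzv.symm) (hG.adj_toward hzw.symm)
      (hG.toward_ne_toward_of_mem_support hp hz hzv hzw).symm
  exact apply_compSet_eq_of_branch_subset hf (hG.adj_toward hvw.symm) (hG.adj_toward hzw.symm)
    (hfb ▸ hwz (ι_apply_compSet_mem_branch hf hb)) hzv'

lemma mem_cordsAt_of_mem_support (hf : IsStableTransversal (clus T) f) {v w z : T.V}
    {c : Sym2 α} (hv : c ∈ T.cordsAt f v) (hw : c ∈ T.cordsAt f w) {p : T.tree.Walk v w}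
    (hp : p.IsPath) (hz : z ∈ p.support) : c ∈ T.cordsAt f z := by
  obtain rfl | hzv := eq_or_ne z v
  · exact hv
  obtain rfl | hzw := eq_or_ne z w
  · exact hw
  have hG := T.isTree
  have hne := hG.toward_ne_toward_of_mem_support hp hz hzv hzw
  have hvw : v ≠ w := by
    rintro rfl
    exact hne rfl
  rw [eq_of_mem_cordsAt_of_mem_cordsAt hf hvw hv hw, apply_compSet_toward_eq hf hv hw hp hz hzv hzw,
    apply_compSet_toward_eq hf hw hv hp.reverse (by simpa using hz) hzw hzv]
  exact mem_cordsAt.mpr ⟨_, _, hG.adj_toward hzw.symm, hG.adj_toward hzv.symm,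
    fun he => hne (eq_of_apply_compSet_eq hf (hG.adj_toward hzw.symm) (hG.adj_toward hzv.symm)
      he).symm, rfl⟩

lemma exists_apply_compSet_eq (hf : IsStableTransversal (clus T) f) {v w : T.V}
    (h : T.tree.Adj v w) (hw : T.IsInterior w) :
    ∃ t, T.tree.Adj w t ∧ t ≠ v ∧ f (T.compSet v w) = f (T.compSet w t) := by
  have hG := T.isTree
  have hx := ι_apply_compSet_mem_branch hf h
  have hxw : T.ι (f (T.compSet v w)) ≠ w := fun he => hw ⟨_, (apply_compSet_mem hf h).1, he⟩
  have htv : T.tree.toward w (T.ι (f (T.compSet v w))) ≠ v := fun he => by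
    have hxt := hG.mem_branch_toward hxw
    rw [he] at hxt
    exact hG.isAcyclic.not_mem_branch_of_adj h hx hxt
  refine ⟨_, hG.adj_toward hxw, htv, apply_compSet_eq_of_branch_subset hf h (hG.adj_toward hxw)
    (hG.mem_branch_toward hxw) ?_⟩
  exact hG.isAcyclic.branch_subset_branch (mem_branch_self h.ne') h.symm (mem_branch_self h.ne)
    (hG.adj_toward hxw) htv

lemma existsUnique_mem_cordsAt (hf : IsStableTransversal (clus T) f) {v w : T.V}
    (h : T.tree.Adj v w) (hv : T.IsInterior v) (hw : T.IsInterior w) :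
    ∃! c, c ∈ T.cordsAt f v ∧ c ∈ T.cordsAt f w := by
  have hG := T.isTree
  obtain ⟨t, ht, htv, het⟩ := exists_apply_compSet_eq hf h hw
  obtain ⟨s, hs, hsw, hes⟩ := exists_apply_compSet_eq hf h.symm hv
  refine ⟨s(f (T.compSet v w), f (T.compSet w v)), ⟨?_, ?_⟩, fun c hc => ?_⟩
  · rw [hes]
    exact mem_cordsAt.mpr ⟨w, s, h, hs, fun he => hsw (eq_of_apply_compSet_eq hf h hs he).symm, rfl⟩
  · rw [het]
    exact mem_cordsAt.mpr ⟨t, v, ht, h.symm, fun he => htv (eq_of_apply_compSet_eq hf ht h.symm he),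
      rfl⟩
  · rw [eq_of_mem_cordsAt_of_mem_cordsAt hf h.ne hc.1 hc.2, hG.toward_eq h (mem_branch_self h.ne'),
      hG.toward_eq h.symm (mem_branch_self h.ne)]

variable (T f)

noncomputable def cordSupport (c : Sym2 α) : Finset T.V :=
  T.interiorVerts.filter (c ∈ T.cordsAt f ·)

variable {T f}

lemma connected_induce_cordSupport (hf : IsStableTransversal (clus T) f) {c : Sym2 α}
    (hc : c ∈ T.interiorVerts.biUnion (T.cordsAt f)) :
    (T.tree.induce ↑(T.cordSupport f c)).Connected := by
  obtain ⟨v₀, hv₀, hcv₀⟩ := mem_biUnion.mp hc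
  refine induce_connected_of_forall_walk (u := v₀) (by simp [cordSupport, hv₀, hcv₀])
    fun v hv => ⟨T.treePath v₀ v, fun z hz => ?_⟩
  simp only [cordSupport, coe_filter, Set.mem_ofPred_eq, mem_interiorVerts] at hv hv₀ ⊢
  exact ⟨T.isInterior_of_mem_support (T.treePath_isPath v₀ v) hz hv₀ hv.1,
    mem_cordsAt_of_mem_support hf hcv₀ hv.2 (T.treePath_isPath v₀ v) hz⟩

lemma sum_card_cordSupport (hT : T.IsFullyResolved) (hf : IsStableTransversal (clus T) f) :
    ∑ c ∈ T.interiorVerts.biUnion (T.cordsAt f), #(T.cordSupport f c) = 3 * #T.interiorVerts := by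
  change ∑ c ∈ _, #(T.interiorVerts.bipartiteBelow (fun v c => c ∈ T.cordsAt f v) c) = _
  rw [← sum_card_bipartiteAbove_eq_sum_card_bipartiteBelow, mul_comm, ← smul_eq_mul,
    ← sum_const]
  refine sum_congr rfl fun v hv => ?_
  rw [bipartiteAbove, filter_mem_eq_inter, inter_eq_right.mpr (subset_biUnion_of_mem _ hv),
    card_cordsAt hT hf (T.mem_interiorVerts.mp hv)]

lemma existsUnique_mem_sym2_cordSupport (hf : IsStableTransversal (clus T) f) {e : Sym2 T.V}
    (he : e ∈ T.tree.edgeFinset ∩ T.interiorVerts.sym2) :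
    ∃! c, c ∈ T.interiorVerts.biUnion (T.cordsAt f) ∧ e ∈ (T.cordSupport f c).sym2 := by
  induction e using Sym2.ind with | h v w => ?_
  simp only [mem_inter, mem_edgeFinset, mem_edgeSet, mk_mem_sym2_iff] at he
  obtain ⟨h, hv, hw⟩ := he
  obtain ⟨c, hc, hu⟩ := existsUnique_mem_cordsAt hf h (T.mem_interiorVerts.mp hv)
    (T.mem_interiorVerts.mp hw)
  refine ⟨c, ⟨mem_biUnion.mpr ⟨v, hv, hc.1⟩, ?_⟩, fun d hd => hu d ?_⟩
  · simpa [cordSupport, hv, hw] using hc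
  · simpa [cordSupport, hv, hw] using hd.2

end XTree

open XTree in
theorem stableTripletCover_card_general {α : Type} (X : Set α)
    (hcard : 3 ≤ X.ncard) (T : XTree α X) (hT : T.IsFullyResolved)
    (L : Set (Sym2 α)) (hL : IsStableTripletCover T L) :
    L.ncard = 2 * X.ncard - 3 := by
  classical
  let _ := T.fintypeV
  obtain ⟨f, hf, rfl⟩ := hL
  have hI := T.card_interiorVerts_add_two hT
  have hcount := T.isTree.isAcyclic.sum_card_add_one
    (T.connected_induce_interiorVerts (Finset.card_pos.mp (by omega)))
    (fun c hc => connected_induce_cordSupport hf hc) (fun c _ => Finset.filter_subset _ _)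
    (fun e he => existsUnique_mem_sym2_cordSupport hf he)
  rw [sum_card_cordSupport hT hf] at hcount
  rw [tripletCoverOf_eq hf, Set.ncard_coe_finset]
  omega

open XTree in
/-- If `L` is a stable triplet cover of a fully-resolved `X`-tree `T`
with `n := |X| ≥ 3`, then `|L| = 2n - 3`. -/
theorem stableTripletCover_card {α : Type} (X : Set α) (hfin : X.Finite)
    (hcard : 3 ≤ X.ncard) (T : XTree α X) (hT : T.IsFullyResolved)
    (L : Set (Sym2 α)) (hL : IsStableTripletCover T L) :
    L.ncard = 2 * X.ncard - 3 :=
  stableTripletCover_card_general X hcard T hT L hL
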